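/- Suppose γ : ℝ → ℂ is measurable with |γ(σ)| ≤ F·(1+σ²)^{K/2} for σ ≥ 0, where F > 0 and K ≥ 0. Then there exist R > 0 and Σ_0 > 0 such that for all Σ > Σ_0 and all t ∈ ℂ with Re t < 0, |∫_0^Σ γ(σ) e^{-σt} dσ| ≤ R·F·|Re t|^{-1}·e^{Σ·|Re t|}·Σ^K. -/

import Mathlib

/-!
On `[0, S]` with `S ≥ 1` the weight `(1 + σ²)^{K/2}` is at most `(2S²)^{K/2} = 2^{K/2} S^K`, while for
`Re t = -a < 0` the factor `e^{-σt}` has modulus `e^{σa}`, whose integral over `[0, S]` is at most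
`e^{Sa}/a`.
-/

open MeasureTheory Set

lemma one_add_sq_rpow_half_le {p σ S : ℝ} (hp : 0 ≤ p) (hσ : 0 ≤ σ) (hσS : σ ≤ S) (hS : 1 ≤ S) :
    (1 + σ ^ 2) ^ (p / 2) ≤ 2 ^ (p / 2) * S ^ p := by
  have hsq : 1 + σ ^ 2 ≤ 2 * S ^ 2 := by nlinarith
  calc (1 + σ ^ 2) ^ (p / 2) ≤ (2 * S ^ 2) ^ (p / 2) := by gcongr
    _ = 2 ^ (p / 2) * S ^ p := by
      rw [Real.mul_rpow zero_le_two (by positivity), ← Real.rpow_natCast, ← Real.rpow_mul (by linarith)]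
      ring_nf

lemma integral_exp_mul_le_exp_div {a : ℝ} (ha : 0 < a) (S : ℝ) :
    ∫ σ in (0 : ℝ)..S, Real.exp (σ * a) ≤ Real.exp (S * a) / a := by
  rw [intervalIntegral.integral_comp_mul_right (fun x => Real.exp x) ha.ne', integral_exp]
  simp only [zero_mul, Real.exp_zero, smul_eq_mul, inv_mul_eq_div]
  gcongr
  linarith

lemma Complex.norm_exp_neg_ofReal_mul (σ : ℝ) (t : ℂ) :
    ‖Complex.exp (-(σ : ℂ) * t)‖ = Real.exp (σ * -t.re) := by
  simp [Complex.norm_exp]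

lemma norm_integral_mul_cexp_le {f : ℝ → ℂ} {C S : ℝ} {t : ℂ} (hC : 0 ≤ C) (hS : 0 ≤ S)
    (ht : t.re < 0) (hf : ∀ σ ∈ Ioc 0 S, ‖f σ‖ ≤ C) :
    ‖∫ σ in (0 : ℝ)..S, f σ * Complex.exp (-(σ : ℂ) * t)‖ ≤
      C * Real.exp (S * -t.re) / -t.re := by
  have hpointwise : ∀ σ ∈ Ioc 0 S,
      ‖f σ * Complex.exp (-(σ : ℂ) * t)‖ ≤ C * Real.exp (σ * -t.re) := fun σ hσ => by
    rw [norm_mul, Complex.norm_exp_neg_ofReal_mul]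
    gcongr
    exact hf σ hσ
  have hint : IntervalIntegrable (fun σ => C * Real.exp (σ * -t.re)) volume 0 S := by
    apply Continuous.intervalIntegrable
    fun_prop
  calc _ ≤ ∫ σ in (0 : ℝ)..S, C * Real.exp (σ * -t.re) :=
        intervalIntegral.norm_integral_le_of_norm_le hS (.of_forall hpointwise) hint
    _ = C * ∫ σ in (0 : ℝ)..S, Real.exp (σ * -t.re) := intervalIntegral.integral_const_mul _ _
    _ ≤ C * Real.exp (S * -t.re) / -t.re := by
      rw [mul_div_assoc]
      exact mul_le_mul_of_nonneg_left (integral_exp_mul_le_exp_div (by linarith) S) hC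

theorem truncated_laplace_left_halfplane_bound_general (K F : ℝ) (hK : 0 ≤ K) (hF : 0 < F)
    (γ : ℝ → ℂ)
    (hbd : ∀ σ : ℝ, 0 ≤ σ → ‖γ σ‖ ≤ F * (1 + σ ^ 2) ^ (K / 2)) :
    ∃ R : ℝ, 0 < R ∧ ∃ S₀ : ℝ, 0 < S₀ ∧ ∀ S : ℝ, S₀ < S → ∀ t : ℂ, t.re < 0 →
      ‖∫ σ in (0 : ℝ)..S, γ σ * Complex.exp (-(σ : ℂ) * t)‖ ≤
        R * F * |t.re|⁻¹ * Real.exp (S * |t.re|) * S ^ K := by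
  refine ⟨2 ^ (K / 2), by positivity, 1, one_pos, fun S hS t ht => ?_⟩
  have hγ : ∀ σ ∈ Ioc 0 S, ‖γ σ‖ ≤ F * (2 ^ (K / 2) * S ^ K) := fun σ hσ =>
    (hbd σ hσ.1.le).trans <| mul_le_mul_of_nonneg_left
      (one_add_sq_rpow_half_le hK hσ.1.le hσ.2 hS.le) hF.le
  calc _ ≤ F * (2 ^ (K / 2) * S ^ K) * Real.exp (S * -t.re) / -t.re :=
        norm_integral_mul_cexp_le (by positivity) (by linarith) ht hγ
    _ = _ := by rw [abs_of_neg ht]; ring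

/-- Bound for the truncated Laplace transform on the left half-plane: for
`Re t < 0` and large `Σ`, `|∫_0^Σ γ(σ)e^{-σt}dσ| ≤ R·F·|Re t|⁻¹·e^{Σ|Re t|}·Σ^K`. -/
theorem truncated_laplace_left_halfplane_bound (K F : ℝ) (hK : 0 ≤ K) (hF : 0 < F)
    (γ : ℝ → ℂ) (hmeas : Measurable γ)
    (hbd : ∀ σ : ℝ, 0 ≤ σ → ‖γ σ‖ ≤ F * (1 + σ ^ 2) ^ (K / 2)) :
    ∃ R : ℝ, 0 < R ∧ ∃ S₀ : ℝ, 0 < S₀ ∧ ∀ S : ℝ, S₀ < S → ∀ t : ℂ, t.re < 0 →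
      ‖∫ σ in (0 : ℝ)..S, γ σ * Complex.exp (-(σ : ℂ) * t)‖ ≤
        R * F * |t.re|⁻¹ * Real.exp (S * |t.re|) * S ^ K :=
  truncated_laplace_left_halfplane_bound_general K F hK hF γ hbd
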